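/- arXiv:2508.19122 — 6 statements merged into one kernel-verified Lean document; each statement's English description precedes it below -/
import Mathlib

section
/- Let G be a group with the subgroup topology G^H determined by a subgroup H. Then G^H satisfies the T₀ separation axiom if and only if H is the trivial subgroup. -/
open Pointwise

/-- The subgroup topology on `G` determined by a collection `F` of subgroups:
generated by all left cosets of members of `F`. -/
def subgroupTopology {G : Type*} [Group G] (F : Set (Subgroup G)) : TopologicalSpace G :=
  TopologicalSpace.generateFrom {s | ∃ (g : G) (K : Subgroup G), K ∈ F ∧ s = g • (K : Set G)}

/-- A collection of subgroups is a neighbourhood family if any two members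
contain a common member. -/
def IsNeighbourhoodFamily {G : Type*} [Group G] (F : Set (Subgroup G)) : Prop :=
  ∀ K₁ ∈ F, ∀ K₂ ∈ F, ∃ S ∈ F, S ≤ K₁ ⊓ K₂

/-- The subgroup topology `G^H` determined by a subgroup `H`: generated by all
left cosets of subgroups containing `H`. -/
def subgroupTopologyOf {G : Type*} [Group G] (H : Subgroup G) : TopologicalSpace G :=
  subgroupTopology {K | H ≤ K}

/-! Each basic open set `gK` with `H ≤ K` is a union of left cosets of `H`, so every open set
of `G^H` is pulled back from the discrete space `G ⧸ H`; consequently `x` and `xh` (`h ∈ H`)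
cannot be separated by open sets. Conversely, for `H = ⊥` the singletons `{g} = g • ⊥` are open. -/

open Topology

section

variable {G : Type*} [Group G]

theorem induced_mk_le_subgroupTopology {H : Subgroup G} {F : Set (Subgroup G)}
    (hF : ∀ K ∈ F, H ≤ K) :
    TopologicalSpace.induced (QuotientGroup.mk : G → G ⧸ H) ⊥ ≤ subgroupTopology F := by
  rw [subgroupTopology, TopologicalSpace.le_generateFrom_iff_subset_isOpen]
  rintro _ ⟨g, K, hK, rfl⟩
  refine (@isOpen_induced_iff _ _ ⊥ _ _).mpr ⟨QuotientGroup.mk '' (g • (K : Set G)), trivial, ?_⟩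
  refine (Set.subset_preimage_image _ _).antisymm' ?_
  rintro y ⟨x, hx, hxy⟩
  rw [QuotientGroup.eq] at hxy
  rw [mem_leftCoset_iff] at hx ⊢
  simpa [mul_assoc] using K.mul_mem hx (hF K hK hxy)

theorem mul_mem_of_isOpen_subgroupTopologyOf {H : Subgroup G} {U : Set G}
    (hU : IsOpen[subgroupTopologyOf H] U) {x h : G} (hx : x ∈ U) (hh : h ∈ H) : x * h ∈ U := by
  obtain ⟨t, -, rfl⟩ := @isOpen_induced_iff _ _ ⊥ _ _ |>.mp
    (induced_mk_le_subgroupTopology (fun _ hK => hK) U hU)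
  simpa [QuotientGroup.mk_mul_of_mem x hh] using hx

theorem inseparable_mul_right_subgroupTopologyOf {H : Subgroup G} (x : G) {h : G} (hh : h ∈ H) :
    @Inseparable G (subgroupTopologyOf H) x (x * h) :=
  (@inseparable_iff_forall_isOpen G (subgroupTopologyOf H) _ _).mpr fun _ hU =>
    ⟨fun hx => mul_mem_of_isOpen_subgroupTopologyOf hU hx hh,
      fun hxh => by simpa using mul_mem_of_isOpen_subgroupTopologyOf hU hxh (H.inv_mem hh)⟩

theorem discreteTopology_subgroupTopologyOf_bot :
    @DiscreteTopology G (subgroupTopologyOf ⊥) :=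
  @DiscreteTopology.mk _ (subgroupTopologyOf ⊥) <| eq_bot_of_singletons_open fun g =>
    .basic _ ⟨g, ⊥, le_refl (⊥ : Subgroup G), by simp [Set.smul_set_singleton]⟩

end

theorem subgroupTopologyOf_t0_iff {G : Type*} [Group G] (H : Subgroup G) :
    @T0Space G (subgroupTopologyOf H) ↔ H = ⊥ := by
  let _ := subgroupTopologyOf H
  constructor
  · intro _
    refine (Subgroup.eq_bot_iff_forall H).mpr fun h hh => ?_
    simpa using (inseparable_mul_right_subgroupTopologyOf 1 hh).eq.symm
  · rintro rfl
    have := discreteTopology_subgroupTopologyOf_bot (G := G)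
    infer_instance
end

section
/- Let G be a group with the subgroup topology G^H determined by a subgroup H. Then G^H is totally disconnected if and only if H is the trivial subgroup. -/
open Pointwise

/-! In `G^H` every open set is a union of left cosets of `H`, so each coset `x • H` is
preconnected and `G^H` can only be totally disconnected when `H` is trivial. Conversely `G^⊥` has
every singleton `g • ⊥` among its basic open sets, so it is discrete. -/

section subgroupTopology

variable {G : Type*} [Group G] {F : Set (Subgroup G)} {H : Subgroup G}

lemma smul_subset_of_isOpen_subgroupTopology (hF : ∀ K ∈ F, H ≤ K) {U : Set G}
    (hU : (subgroupTopology F).IsOpen U) {x : G} (hx : x ∈ U) : x • (H : Set G) ⊆ U := by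
  induction hU generalizing x with
  | basic s hs =>
    obtain ⟨g, K, hK, rfl⟩ := hs
    obtain ⟨k, hk, rfl⟩ := hx
    rintro _ ⟨h, hh, rfl⟩
    exact ⟨k * h, K.mul_mem hk (hF K hK hh), by simp [mul_assoc]⟩
  | univ => exact Set.subset_univ _
  | inter s t _ _ ihs iht => exact Set.subset_inter (ihs hx.1) (iht hx.2)
  | sUnion S _ ih =>
    obtain ⟨s, hs, hxs⟩ := hx
    exact (ih s hs hxs).trans (Set.subset_sUnion_of_mem hs)

lemma isPreconnected_smul_subgroupTopology (hF : ∀ K ∈ F, H ≤ K) (x : G) :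
    @IsPreconnected G (subgroupTopology F) (x • (H : Set G)) := by
  let := subgroupTopology F
  rintro u v - hv - ⟨y, hyH, hyu⟩ ⟨z, hzH, hzv⟩
  have hcoset : z • (H : Set G) = x • (H : Set G) := by
    obtain ⟨h, hh, rfl⟩ := hzH
    rw [smul_assoc, smul_coe_set hh]
  refine ⟨y, hyH, hyu, ?_⟩
  exact smul_subset_of_isOpen_subgroupTopology hF hv hzv (hcoset ▸ hyH)

lemma discreteTopology_subgroupTopology (hF : ⊥ ∈ F) :
    @DiscreteTopology G (subgroupTopology F) := by
  let := subgroupTopology F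
  refine discreteTopology_iff_isOpen_singleton.mpr fun g ↦ ?_
  have hsingleton : ({g} : Set G) = g • ((⊥ : Subgroup G) : Set G) := by
    simp [Set.smul_set_singleton]
  rw [hsingleton]
  exact TopologicalSpace.GenerateOpen.basic _ ⟨g, ⊥, hF, rfl⟩

end subgroupTopology

theorem subgroupTopologyOf_totallyDisconnected_iff {G : Type*} [Group G] (H : Subgroup G) :
    @TotallyDisconnectedSpace G (subgroupTopologyOf H) ↔ H = ⊥ := by
  let := subgroupTopologyOf H
  constructor
  · intro _
    have hH : IsPreconnected ((1 : G) • (H : Set G)) :=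
      isPreconnected_smul_subgroupTopology (fun _ hK ↦ hK) 1
    rw [one_smul] at hH
    have := hH.subsingleton.coe_sort
    exact Subgroup.eq_bot_of_subsingleton H
  · rintro rfl
    have : DiscreteTopology G := discreteTopology_subgroupTopology (Set.mem_ofPred.mpr le_rfl)
    infer_instance
end

section
/- Let G be a group, Σ a neighbourhood family of subgroups of G whose infinitesimal subgroup S_Σ = ⋂{K | K ∈ Σ} belongs to Σ, and equip G with the subgroup topology G^Σ generated by left cosets of elements of Σ. Then G^Σ is a topological group if and only if S_Σ is a normal subgroup of G. -/
open Pointwise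

open TopologicalSpace

/-!
When `sInf F` belongs to `F` it is the least member, so the open sets of the subgroup topology are
exactly the unions of its left cosets: the topology is pulled back from the discrete topology on
`G ⧸ sInf F`. If `sInf F` is normal this is a pullback of a discrete group along a homomorphism.
Conversely, `sInf F` is the closure of `{1}`, and in a topological group the closure of the trivial
subgroup is normal.
-/

namespace QuotientGroup

variable {G : Type*} [Group G]

lemma preimage_mk_singleton_mk (H : Subgroup G) (g : G) :
    (mk : G → G ⧸ H) ⁻¹' {(g : G ⧸ H)} = g • (H : Set G) := by
  ext x
  simp [QuotientGroup.eq, Set.mem_smul_set_iff_inv_smul_mem, eq_comm]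

lemma preimage_image_mk_smul_of_le {H K : Subgroup G} (hHK : H ≤ K) (g : G) :
    (mk : G → G ⧸ H) ⁻¹' (mk '' (g • (K : Set G))) = g • (K : Set G) := by
  refine (Set.subset_preimage_image _ _).antisymm' ?_
  rintro x ⟨y, hy, hxy⟩
  rw [QuotientGroup.eq] at hxy
  rw [Set.mem_smul_set_iff_inv_smul_mem] at hy ⊢
  simpa [smul_eq_mul, mul_assoc] using K.mul_mem hy (hHK hxy)

end QuotientGroup

section

variable {G : Type*} [Group G]

lemma subgroupTopology_eq_induced_mk_of_isLeast {F : Set (Subgroup G)} {H : Subgroup G}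
    (hH : IsLeast F H) :
    subgroupTopology F = induced (QuotientGroup.mk : G → G ⧸ H) (⊥ : TopologicalSpace (G ⧸ H)) := by
  refine le_antisymm ?_ (le_generateFrom ?_)
  · rw [← coinduced_le_iff_le_induced]
    refine (eq_bot_of_singletons_open fun q => ?_).le
    induction q using QuotientGroup.induction_on with
    | H g =>
      rw [isOpen_coinduced, QuotientGroup.preimage_mk_singleton_mk]
      exact GenerateOpen.basic _ ⟨g, H, hH.1, rfl⟩
  · rintro _ ⟨g, K, hK, rfl⟩
    exact (isOpen_induced_iff (t := ⊥)).2
      ⟨_, trivial, QuotientGroup.preimage_image_mk_smul_of_le (hH.2 hK) g⟩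

lemma closure_singleton_one_induced_mk (H : Subgroup G) :
    @closure G (induced (QuotientGroup.mk : G → G ⧸ H) (⊥ : TopologicalSpace (G ⧸ H))) {1} = H := by
  let _ : TopologicalSpace (G ⧸ H) := ⊥
  have _ : DiscreteTopology (G ⧸ H) := ⟨rfl⟩
  let _ : TopologicalSpace G := induced QuotientGroup.mk ‹TopologicalSpace (G ⧸ H)›
  rw [(Topology.IsInducing.induced _).closure_eq_preimage_closure_image, Set.image_singleton,
    closure_discrete, QuotientGroup.preimage_mk_one]

lemma isTopologicalGroup_induced_mk_iff_normal (H : Subgroup G) :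
    @IsTopologicalGroup G
      (induced (QuotientGroup.mk : G → G ⧸ H) (⊥ : TopologicalSpace (G ⧸ H))) _ ↔ H.Normal := by
  let _ : TopologicalSpace (G ⧸ H) := ⊥
  have _ : DiscreteTopology (G ⧸ H) := ⟨rfl⟩
  let _ : TopologicalSpace G := induced QuotientGroup.mk ‹TopologicalSpace (G ⧸ H)›
  constructor
  · intro
    have hclosure : (⊥ : Subgroup G).topologicalClosure = H :=
      SetLike.coe_injective (closure_singleton_one_induced_mk H)
    exact hclosure ▸ (⊥ : Subgroup G).is_normal_topologicalClosure
  · intro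
    exact topologicalGroup_induced (QuotientGroup.mk' H)

end

theorem subgroupTopology_topologicalGroup_iff_normal_general {G : Type*} [Group G]
    (F : Set (Subgroup G)) (hS : sInf F ∈ F) :
    @IsTopologicalGroup G (subgroupTopology F) _ ↔ (sInf F).Normal := by
  rw [subgroupTopology_eq_induced_mk_of_isLeast ⟨hS, fun _ hK => sInf_le hK⟩]
  exact isTopologicalGroup_induced_mk_iff_normal _

theorem subgroupTopology_topologicalGroup_iff_normal {G : Type*} [Group G]
    (F : Set (Subgroup G)) (hF : IsNeighbourhoodFamily F) (hS : sInf F ∈ F) :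
    @IsTopologicalGroup G (subgroupTopology F) _ ↔ (sInf F).Normal :=
  subgroupTopology_topologicalGroup_iff_normal_general F hS
end

section
/- Let G be a group and H a subgroup. The subgroup topology G^H (generated by left cosets of subgroups containing H) makes G a topological group if and only if H is a normal subgroup of G. -/
/-!
The open sets of `G^H` are exactly the unions of left cosets of `H`, so `G^H` is the topology
pulled back from the discrete topology on `G ⧸ H` and the neighbourhood filter of `a` is the
principal filter of `a • H`. If `H` is normal, the quotient map is a homomorphism onto a discrete
group, so the pulled-back topology is a group topology. Conversely, in a topological group the
neighbourhoods of `a` are both the left and the right translates by `a` of those of `1`, which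
forces `a • H = H • a` for every `a`.
-/

open Pointwise

open Filter

theorem QuotientGroup.preimage_mk_singleton {G : Type*} [Group G] (H : Subgroup G) (a : G) :
    ((↑) : G → G ⧸ H) ⁻¹' {(a : G ⧸ H)} = a • (H : Set G) := by
  ext x
  rw [mem_leftCoset_iff, Set.mem_preimage, Set.mem_singleton_iff, eq_comm, QuotientGroup.eq,
    SetLike.mem_coe]

theorem Subgroup.coe_mul_coe_of_le {G : Type*} [Group G] {H K : Subgroup G} (hHK : H ≤ K) :
    (K : Set G) * H = K :=
  Set.Subset.antisymm ((Set.mul_subset_mul_left hHK).trans (coe_mul_coe K).le)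
    (Set.subset_mul_left _ H.one_mem)

section SubgroupTopologyOf

variable {G : Type*} [Group G] (H : Subgroup G)

theorem subgroupTopologyOf_eq_induced [TopologicalSpace (G ⧸ H)] [DiscreteTopology (G ⧸ H)] :
    subgroupTopologyOf H = .induced ((↑) : G → G ⧸ H) ‹_› := by
  refine le_antisymm (fun s hs ↦ ?_) (le_generateFrom ?_)
  · obtain ⟨t, -, rfl⟩ := isOpen_induced_iff.1 hs
    let _ := subgroupTopologyOf H
    refine isOpen_iff_forall_mem_open.2 fun x hx ↦
      ⟨x • (H : Set G), ?_, .basic _ ⟨x, H, le_refl H, rfl⟩, mem_own_leftCoset H.toSubmonoid x⟩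
    rw [← QuotientGroup.preimage_mk_singleton]
    exact Set.preimage_mono (Set.singleton_subset_iff.2 hx)
  · rintro _ ⟨g, K, hK, rfl⟩
    refine isOpen_induced_iff.2 ⟨(↑) '' (g • (K : Set G)), isOpen_discrete _, ?_⟩
    rw [QuotientGroup.preimage_image_mk_eq_mul, smul_mul_assoc, Subgroup.coe_mul_coe_of_le hK]

theorem nhds_subgroupTopologyOf (a : G) :
    @nhds G (subgroupTopologyOf H) a = 𝓟 (a • (H : Set G)) := by
  let _ : TopologicalSpace (G ⧸ H) := ⊥
  have : DiscreteTopology (G ⧸ H) := ⟨rfl⟩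
  rw [subgroupTopologyOf_eq_induced, nhds_induced, nhds_discrete, comap_pure,
    QuotientGroup.preimage_mk_singleton]

theorem isTopologicalGroup_subgroupTopologyOf [H.Normal] :
    @IsTopologicalGroup G (subgroupTopologyOf H) _ := by
  let _ : TopologicalSpace (G ⧸ H) := ⊥
  have : DiscreteTopology (G ⧸ H) := ⟨rfl⟩
  rw [subgroupTopologyOf_eq_induced]
  exact topologicalGroup_induced (QuotientGroup.mk' H)

theorem normal_of_isTopologicalGroup_subgroupTopologyOf
    [@IsTopologicalGroup G (subgroupTopologyOf H) _] : H.Normal := by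
  let _ := subgroupTopologyOf H
  refine normal_of_eq_cosets H fun a ↦ ?_
  have hnhds := (map_mul_left_nhds_one a).trans (map_mul_right_nhds_one a).symm
  rw [nhds_subgroupTopologyOf, map_principal, map_principal, principal_eq_iff_eq,
    one_smul] at hnhds
  rwa [← Set.image_smul, ← Set.image_smul]

end SubgroupTopologyOf

theorem subgroupTopologyOf_topologicalGroup_iff_normal {G : Type*} [Group G] (H : Subgroup G) :
    @IsTopologicalGroup G (subgroupTopologyOf H) _ ↔ H.Normal :=
  ⟨fun _ ↦ normal_of_isTopologicalGroup_subgroupTopologyOf H,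
    fun _ ↦ isTopologicalGroup_subgroupTopologyOf H⟩
end

section
/- Let G be a group and let Σ and Σ′ be two neighbourhood families of subgroups of G such that S_Σ ≤ S_{Σ′} and S_Σ ∈ Σ. Then the subgroup topology G^Σ is finer than G^{Σ′}, i.e., every set open in G^{Σ′} is open in G^Σ. -/
open Pointwise

theorem subgroupTopology_le_of_sInf_le {G : Type*} [Group G]
    (F F' : Set (Subgroup G)) (hF : IsNeighbourhoodFamily F) (hF' : IsNeighbourhoodFamily F')
    (hle : sInf F ≤ sInf F') (hmem : sInf F ∈ F) :
    subgroupTopology F ≤ subgroupTopology F' := by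
  letI : TopologicalSpace G := subgroupTopology F
  apply le_generateFrom
  rintro s ⟨g, K, hK, rfl⟩
  have hS : (sInf F : Subgroup G) ≤ K := hle.trans (sInf_le hK)
  have : g • (K : Set G) = ⋃ x ∈ g • (K : Set G), x • ((sInf F : Subgroup G) : Set G) := by
    ext y
    simp only [Set.mem_iUnion]
    constructor
    · intro hy
      exact ⟨y, hy, 1, Subgroup.one_mem _, by simp⟩
    · rintro ⟨x, ⟨k, hk, rfl⟩, t, ht, rfl⟩
      exact ⟨k * t, K.mul_mem hk (hS ht), by simp [mul_assoc]⟩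
  rw [this]
  exact isOpen_biUnion fun x _ =>
    TopologicalSpace.isOpen_generateFrom_of_mem ⟨x, sInf F, hmem, rfl⟩
end

section
/- Let G be a group and H a normal subgroup of G such that the quotient group G/H is a Dedekind group (every subgroup of G/H is normal). Then the subgroup topology G^H makes G a topological group. -/
open Pointwise

/-! Every subgroup `K ≥ H` is the preimage of a subgroup of the Dedekind group `G ⧸ H`, hence
normal. For normal `K` the cosets satisfy `aK · bK ⊆ abK` and `(gK)⁻¹ = g⁻¹K`, so the preimages
of the subbasic open cosets under multiplication and inversion are open. -/
open Topology

theorem Subgroup.normal_of_ker_le {G Q : Type*} [Group G] [Group Q] (f : G →* Q)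
    (hQ : ∀ L : Subgroup Q, L.Normal) {K : Subgroup G} (hK : f.ker ≤ K) : K.Normal :=
  comap_map_eq_self hK ▸ (hQ _).comap f

namespace Subgroup.Normal

variable {G : Type*} [Group G] {K : Subgroup G}

theorem smul_mul_smul_subset (hK : K.Normal) (a b : G) :
    a • (K : Set G) * b • (K : Set G) ⊆ (a * b) • (K : Set G) := by
  rintro _ ⟨_, ⟨k₁, hk₁, rfl⟩, _, ⟨k₂, hk₂, rfl⟩, rfl⟩
  refine ⟨b⁻¹ * k₁ * b * k₂, mul_mem (hK.conj_mem' k₁ hk₁ b) hk₂, ?_⟩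
  simp only [smul_eq_mul]
  group

theorem inv_smul_coe (hK : K.Normal) (g : G) :
    (g • (K : Set G))⁻¹ = g⁻¹ • (K : Set G) := by
  ext x
  rw [Set.mem_inv, mem_leftCoset_iff, mem_leftCoset_iff, inv_inv, SetLike.mem_coe,
    SetLike.mem_coe, ← inv_mem_iff, mul_inv_rev, inv_inv, hK.mem_comm_iff, inv_inv]

end Subgroup.Normal

section SubgroupTopology

variable {G : Type*} [Group G] {F : Set (Subgroup G)}

theorem isOpen_smul_subgroupTopology {K : Subgroup G} (hK : K ∈ F) (g : G) :
    IsOpen[subgroupTopology F] (g • (K : Set G)) :=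
  TopologicalSpace.isOpen_generateFrom_of_mem ⟨g, K, hK, rfl⟩

theorem isTopologicalGroup_subgroupTopology (hF : ∀ K ∈ F, K.Normal) :
    @IsTopologicalGroup G (subgroupTopology F) _ := by
  let _ := subgroupTopology F
  refine { continuous_mul := ?_, continuous_inv := ?_ } <;>
    refine continuous_generateFrom_iff.mpr ?_ <;> rintro _ ⟨g, K, hK, rfl⟩
  · refine isOpen_iff_forall_mem_open.mpr fun ⟨a, b⟩ hab => ?_
    obtain ⟨k, hk, hgk : g * k = a * b⟩ := hab
    refine ⟨(a • (K : Set G)) ×ˢ (b • (K : Set G)), ?_,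
      (isOpen_smul_subgroupTopology hK a).prod (isOpen_smul_subgroupTopology hK b),
      ⟨mem_own_leftCoset K.toSubmonoid a, mem_own_leftCoset K.toSubmonoid b⟩⟩
    rintro ⟨x, y⟩ ⟨hx, hy⟩
    have hxy : x * y ∈ (a * b) • (K : Set G) :=
      (hF K hK).smul_mul_smul_subset a b (Set.mul_mem_mul hx hy)
    rwa [← hgk, mul_smul, smul_coe_set hk] at hxy
  · rw [Set.inv_preimage, (hF K hK).inv_smul_coe]
    exact isOpen_smul_subgroupTopology hK _

end SubgroupTopology

theorem subgroupTopologyOf_topologicalGroup_of_dedekind {G : Type*} [Group G]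
    (H : Subgroup G) (hH : H.Normal)
    (hDed : ∀ K : Subgroup (G ⧸ H), K.Normal) :
    @IsTopologicalGroup G (subgroupTopologyOf H) _ :=
  isTopologicalGroup_subgroupTopology fun _ hK =>
    Subgroup.normal_of_ker_le (QuotientGroup.mk' H) hDed (by rwa [QuotientGroup.ker_mk'])
end
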